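/- For n ≥ 4, the cyclic factorization number of the modular 2-group M(2^n) of order 2^n is CF₂(M(2^n)) = 4n - 2. -/

import Mathlib

/-!
Let `A = ⟨x⟩` and `Kᵢ = ⟨x^(2^i) y⟩` for `i ≤ n - 1`, so that `K_(n-1) = ⟨y⟩`. The pair
`(x y, y)` satisfies the same relations as `(x, y)`, hence both `A` and `K₀ = ⟨x y⟩` have
index 2, and `HK = G` as soon as one of `H, K` is `A` or `K₀` and the other is not contained in it.

Conversely, every cyclic subgroup is `A`, some `Kᵢ`, or lies in `⟨x²⟩`. The `Kᵢ` with `i ≥ 1` lie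
in the centralizer `C(y)`, and `⟨x²⟩` lies in each of the proper subgroups `A`, `K₀` and `C(y)`.
Two subgroups inside a common proper subgroup never factor `G`, so the cyclic factorizations are
exactly `(A, Kᵢ)`, `(K₀, K_(i+1))` and their swaps, `2n + 2(n - 1) = 4n - 2` pairs.
-/

open Pointwise

/-- The cyclic factorization number `CF₂(G)`: the number of ordered pairs `(H, K)` of
cyclic subgroups of `G` whose set product `HK` is all of `G`. -/
noncomputable def CF2 (G : Type*) [Group G] : ℕ :=
  Nat.card {p : Subgroup G × Subgroup G //
    IsCyclic p.1 ∧ IsCyclic p.2 ∧ (p.1 : Set G) * (p.2 : Set G) = Set.univ}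

open Subgroup

theorem Int.exists_odd_two_pow_dvd_mul_sub_one {c : ℤ} (hc : Odd c) (m : ℕ) :
    ∃ u, Odd u ∧ (2 : ℤ) ^ (m + 1) ∣ c * u - 1 := by
  obtain ⟨u, v, huv⟩ := (Int.isCoprime_two_right.mpr hc).pow_right (n := m + 1)
  have hodd : Odd (u * c) := ⟨-v * 2 ^ m, by linear_combination huv⟩
  exact ⟨u, (Int.odd_mul.mp hodd).1, ⟨-v, by linear_combination huv⟩⟩

theorem Int.not_two_pow_succ_dvd_two_pow (i : ℕ) : ¬(2 : ℤ) ^ (i + 1) ∣ 2 ^ i := fun hdvd =>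
  absurd ((_root_.pow_dvd_pow_iff two_ne_zero (by norm_num [Int.isUnit_iff])).mp hdvd) (by omega)

theorem Int.exists_eq_two_pow_mul_odd {a : ℤ} (ha : a ≠ 0) :
    ∃ (v : ℕ) (c : ℤ), Odd c ∧ a = 2 ^ v * c := by
  obtain ⟨v, m, hm, hnat⟩ := Nat.exists_eq_two_pow_mul_odd (Int.natAbs_ne_zero.mpr ha)
  rcases Int.natAbs_eq a with ha | ha
  · exact ⟨v, m, hm.natCast, by rw [ha, hnat]; push_cast; rfl⟩
  · exact ⟨v, -m, hm.natCast.neg, by rw [ha, hnat]; push_cast; ring⟩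

namespace Subgroup

variable {G : Type*} [Group G] {H K M : Subgroup G}

theorem coe_mul_coe_eq_univ_comm :
    (H : Set G) * (K : Set G) = Set.univ ↔ (K : Set G) * (H : Set G) = Set.univ := by
  constructor <;> intro h <;> rw [← Set.inv_univ, ← h, mul_inv_rev, inv_coe_set, inv_coe_set]

theorem coe_mul_coe_eq_univ_of_index_eq_two (hH : H.index = 2) (hK : ¬K ≤ H) :
    (H : Set G) * (K : Set G) = Set.univ := by
  obtain ⟨k, hkK, hkH⟩ := SetLike.not_le_iff_exists.mp hK
  refine Set.eq_univ_of_forall fun g => ?_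
  by_cases hg : g ∈ H
  · exact ⟨g, hg, 1, one_mem K, mul_one g⟩
  · refine ⟨g * k⁻¹, ?_, k, hkK, inv_mul_cancel_right g k⟩
    simp [mul_mem_iff_of_index_two hH, hg, hkH]

theorem coe_mul_coe_ne_univ_of_le (hH : H ≤ M) (hK : K ≤ M) (hM : M ≠ ⊤) :
    (H : Set G) * (K : Set G) ≠ Set.univ := by
  intro hHK
  refine hM ((eq_top_iff' M).mpr fun g => ?_)
  obtain ⟨a, ha, b, hb, rfl⟩ : g ∈ (H : Set G) * (K : Set G) := hHK ▸ Set.mem_univ g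
  exact mul_mem (hH ha) (hK hb)

end Subgroup

def IsCyclicFactorization {G : Type*} [Group G] (p : Subgroup G × Subgroup G) : Prop :=
  IsCyclic p.1 ∧ IsCyclic p.2 ∧ (p.1 : Set G) * (p.2 : Set G) = Set.univ

theorem IsCyclicFactorization.swap {G : Type*} [Group G] {p : Subgroup G × Subgroup G}
    (hp : IsCyclicFactorization p) : IsCyclicFactorization p.swap :=
  ⟨hp.2.1, hp.1, coe_mul_coe_eq_univ_comm.mp hp.2.2⟩

-- The generators of the modular group `M(2^n)`, with `n = k + 2`.
structure IsModularPair {G : Type*} [Group G] (k : ℕ) (x y : G) : Prop where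
  pow_eq_one : x ^ 2 ^ (k + 1) = 1
  sq_eq_one : y ^ 2 = 1
  inv_mul_mul : y⁻¹ * x * y = x ^ (2 ^ k + 1)
  closure_eq_top : closure {x, y} = ⊤
  card_eq : Nat.card G = 2 ^ (k + 2)

def zpowersTwoPowMul {G : Type*} [Group G] (x y : G) (i : ℕ) : Subgroup G :=
  zpowers (x ^ (2 : ℤ) ^ i * y)

@[simp]
theorem zpowersTwoPowMul_zero {G : Type*} [Group G] (x y : G) :
    zpowersTwoPowMul x y 0 = zpowers (x * y) := by
  simp [zpowersTwoPowMul]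

-- Half of the cyclic factorizations of `M(2^(k+2))`; the other half are their swaps.
def factorPair {G : Type*} [Group G] (x y : G) (k : ℕ) :
    Fin (k + 2) ⊕ Fin (k + 1) → Subgroup G × Subgroup G
  | .inl i => (zpowers x, zpowersTwoPowMul x y i)
  | .inr i => (zpowersTwoPowMul x y 0, zpowersTwoPowMul x y (i + 1))

namespace IsModularPair

variable {G : Type*} [Group G] {k : ℕ} {x y : G}

theorem inv_eq (h : IsModularPair k x y) : y⁻¹ = y :=
  inv_eq_of_mul_eq_one_right (by rw [← sq, h.sq_eq_one])

theorem mul_mem_or_mem (h : IsModularPair k x y) (g : G) :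
    g * y ∈ zpowers x ∨ g ∈ zpowers x := by
  have hconj : y⁻¹ * x * y ∈ zpowers x := h.inv_mul_mul ▸ npow_mem_zpowers x _
  have hg : g ∈ closure {x, y} := h.closure_eq_top ▸ mem_top g
  induction hg using closure_induction_right with
  | one => exact .inr (one_mem _)
  | mul_right b _ s hs ih =>
    rcases hs with rfl | rfl <;> rcases ih with ih | ih
    · exact .inl (by simpa [mul_assoc] using mul_mem ih hconj)
    · exact .inr (mul_mem ih (mem_zpowers s))
    · exact .inr ih
    · exact .inl (by rwa [mul_assoc, ← sq, h.sq_eq_one, mul_one])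
  | mul_inv_cancel b _ s hs ih =>
    rcases hs with rfl | rfl <;> rcases ih with ih | ih
    · exact .inl (by simpa [mul_assoc] using mul_mem ih (inv_mem hconj))
    · exact .inr (mul_mem ih (inv_mem (mem_zpowers s)))
    · exact .inr (by rwa [h.inv_eq])
    · exact .inl (by rwa [inv_mul_cancel_right])

theorem index_zpowers_and_orderOf (h : IsModularPair k x y) :
    (zpowers x).index = 2 ∧ orderOf x = 2 ^ (k + 1) := by
  have hindex : (zpowers x).index ≤ 2 :=
    Nat.le_of_dvd two_pos (index_dvd_two_iff.mpr ⟨y, h.mul_mem_or_mem⟩)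
  have horder : orderOf x ≤ 2 ^ (k + 1) :=
    Nat.le_of_dvd (by positivity) (orderOf_dvd_of_pow_eq_one h.pow_eq_one)
  have hmul : (zpowers x).index * orderOf x = 2 * 2 ^ (k + 1) := by
    rw [← Nat.card_zpowers, index_mul_card, h.card_eq, pow_succ' 2 (k + 1)]
  have horder_eq : orderOf x = 2 ^ (k + 1) := le_antisymm horder (by nlinarith)
  exact ⟨Nat.eq_of_mul_eq_mul_right (by positivity) (horder_eq ▸ hmul), horder_eq⟩

theorem index_zpowers (h : IsModularPair k x y) : (zpowers x).index = 2 :=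
  h.index_zpowers_and_orderOf.1

theorem orderOf_eq (h : IsModularPair k x y) : orderOf x = 2 ^ (k + 1) :=
  h.index_zpowers_and_orderOf.2

theorem notMem_zpowers (h : IsModularPair k x y) : y ∉ zpowers x := by
  intro hy
  have htop : zpowers x = ⊤ := by
    rw [eq_top_iff, ← h.closure_eq_top, closure_le]
    rintro g (rfl | rfl)
    exacts [mem_zpowers g, hy]
  simpa [htop] using h.index_zpowers

theorem zpow_eq_zpow_iff (h : IsModularPair k x y) {a b : ℤ} :
    x ^ a = x ^ b ↔ (2 : ℤ) ^ (k + 1) ∣ b - a := by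
  rw [zpow_eq_zpow_iff_modEq, h.orderOf_eq, Int.modEq_iff_dvd]
  push_cast; rfl

theorem mul_zpow_eq_zpow_mul (h : IsModularPair k x y) (a : ℤ) :
    y * x ^ a = x ^ ((2 ^ k + 1) * a) * y := by
  have hconj : (y⁻¹ * x * y) ^ a = y⁻¹ * x ^ a * y := by
    simpa using conj_zpow (a := y⁻¹) (b := x) (i := a)
  rw [h.inv_mul_mul, ← zpow_natCast, ← zpow_mul] at hconj
  push_cast at hconj
  rw [hconj, h.inv_eq, mul_assoc, ← sq, h.sq_eq_one, mul_one]

theorem zpow_mul_sq (h : IsModularPair k x y) (b : ℤ) :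
    (x ^ b * y) ^ 2 = x ^ (b * (2 ^ k + 2)) := by
  rw [sq, mul_assoc, ← mul_assoc y, h.mul_zpow_eq_zpow_mul, mul_assoc, ← sq y, h.sq_eq_one, mul_one,
    ← zpow_add]
  ring_nf

theorem zpow_mul_zpow_two_mul (h : IsModularPair k x y) (b t : ℤ) :
    (x ^ b * y) ^ (2 * t) = x ^ (b * (2 ^ k + 2) * t) := by
  rw [zpow_mul, zpow_ofNat, h.zpow_mul_sq, ← zpow_mul]

theorem zpow_mul_zpow_two_mul_add_one (h : IsModularPair k x y) (b t : ℤ) :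
    (x ^ b * y) ^ (2 * t + 1) = x ^ (b * ((2 ^ k + 2) * t + 1)) * y := by
  rw [zpow_add_one, h.zpow_mul_zpow_two_mul, ← mul_assoc, ← zpow_add]
  ring_nf

theorem exists_zpow_eq (h : IsModularPair k x y) (g : G) :
    ∃ a : ℤ, g = x ^ a ∨ g = x ^ a * y := by
  rcases h.mul_mem_or_mem g with hg | hg <;> obtain ⟨a, ha⟩ := mem_zpowers_iff.mp hg
  · exact ⟨a, .inr (by rw [ha, mul_assoc, ← sq, h.sq_eq_one, mul_one])⟩
  · exact ⟨a, .inl ha.symm⟩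

theorem zpow_mul_mul_mem_zpowers (h : IsModularPair k x y) (hk : 2 ≤ k) (b : ℤ) {c : ℤ}
    (hc : Odd c) : x ^ (b * c) * y ∈ zpowers (x ^ b * y) := by
  obtain ⟨m, rfl⟩ := Nat.exists_eq_add_of_le' hk
  obtain ⟨w, rfl⟩ := hc
  -- `1 - 2 ^ (m + 1)` inverts `1 + 2 ^ (m + 1)` modulo `2 ^ (m + 2)`.
  refine mem_zpowers_iff.mpr ⟨2 * (w * (1 - 2 ^ (m + 1))) + 1, ?_⟩
  rw [h.zpow_mul_zpow_two_mul_add_one]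
  congr 1
  exact h.zpow_eq_zpow_iff.mpr ⟨b * w * 2 ^ m, by ring⟩

theorem zpowers_zpow_mul_mul (h : IsModularPair k x y) (hk : 2 ≤ k) (b : ℤ) {c : ℤ}
    (hc : Odd c) : zpowers (x ^ (b * c) * y) = zpowers (x ^ b * y) := by
  refine le_antisymm (zpowers_le.mpr (h.zpow_mul_mul_mem_zpowers hk b hc)) ?_
  obtain ⟨u, hu, d, hd⟩ := Int.exists_odd_two_pow_dvd_mul_sub_one hc k
  have hb : x ^ b = x ^ (b * c * u) := h.zpow_eq_zpow_iff.mpr ⟨b * d, by linear_combination b * hd⟩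
  rw [zpowers_le, hb]
  exact h.zpow_mul_mul_mem_zpowers hk _ hu

theorem zpowers_zpow (h : IsModularPair k x y) {c : ℤ} (hc : Odd c) :
    zpowers (x ^ c) = zpowers x := by
  refine le_antisymm (zpowers_le.mpr (zpow_mem (mem_zpowers x) c)) ?_
  obtain ⟨u, -, d, hd⟩ := Int.exists_odd_two_pow_dvd_mul_sub_one hc k
  have hx : (x ^ c) ^ u = x ^ (1 : ℤ) := by
    rw [← zpow_mul, h.zpow_eq_zpow_iff]
    exact ⟨-d, by linear_combination -hd⟩
  have hmem := zpow_mem (mem_zpowers (x ^ c)) u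
  rw [hx, zpow_one] at hmem
  exact zpowers_le.mpr hmem

theorem mul_right (h : IsModularPair k x y) (hk : 2 ≤ k) : IsModularPair k (x * y) y := by
  obtain ⟨m, rfl⟩ := Nat.exists_eq_add_of_le' hk
  have hxy (t : ℤ) : (x * y) ^ (2 * t + 1) = x ^ ((2 ^ (m + 2) + 2) * t + 1) * y := by
    simpa using h.zpow_mul_zpow_two_mul_add_one 1 t
  refine ⟨?_, h.sq_eq_one, ?_, ?_, h.card_eq⟩
  · have hpow := h.zpow_mul_zpow_two_mul 1 (2 ^ (m + 2))
    rw [zpow_one, one_mul, h.zpow_eq_zpow_iff (b := 0).mpr ⟨-(2 ^ (m + 1) + 1), by ring⟩,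
      zpow_zero] at hpow
    rw [← hpow, ← zpow_natCast]
    push_cast
    ring_nf
  · rw [show y⁻¹ * (x * y) * y = y⁻¹ * x * y * y by group, h.inv_mul_mul, ← zpow_natCast,
      ← zpow_natCast, show ((2 ^ (m + 2) + 1 : ℕ) : ℤ) = 2 * 2 ^ (m + 1) + 1 by push_cast; ring,
      hxy]
    congr 1
    exact h.zpow_eq_zpow_iff.mpr ⟨2 ^ m, by ring⟩
  · rw [eq_top_iff, ← h.closure_eq_top, closure_le]
    rintro g (rfl | rfl)
    · simpa using mul_mem (subset_closure (by simp) : g * y ∈ closure {g * y, y})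
        (inv_mem (subset_closure (by simp) : y ∈ closure {g * y, y}))
    · exact subset_closure (by simp)

theorem zpowers_ne_top (h : IsModularPair k x y) : zpowers x ≠ ⊤ := fun htop => by
  simpa [htop] using h.index_zpowers

theorem zpow_ne_zpow_mul (h : IsModularPair k x y) (a b : ℤ) : x ^ a ≠ x ^ b * y := by
  intro hab
  apply h.notMem_zpowers
  rw [show y = (x ^ b)⁻¹ * x ^ a by rw [hab, inv_mul_cancel_left]]
  exact mul_mem (inv_mem (zpow_mem (mem_zpowers x) b)) (zpow_mem (mem_zpowers x) a)

theorem zpowersTwoPowMul_not_le (h : IsModularPair k x y) (i : ℕ) :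
    ¬zpowersTwoPowMul x y i ≤ zpowers x := fun hle => by
  obtain ⟨a, ha⟩ := mem_zpowers_iff.mp (hle (mem_zpowers _))
  exact h.zpow_ne_zpow_mul _ _ ha

theorem zpowersTwoPowMul_ne (h : IsModularPair k x y) (i : ℕ) :
    zpowersTwoPowMul x y i ≠ zpowers x := fun heq => h.zpowersTwoPowMul_not_le i heq.le

theorem zpowersTwoPowMul_ne_of_lt (h : IsModularPair k x y) {i j : ℕ} (hij : i < j)
    (hj : j ≤ k + 1) : zpowersTwoPowMul x y i ≠ zpowersTwoPowMul x y j := by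
  intro heq
  have hmem : x ^ (2 : ℤ) ^ i * y ∈ zpowersTwoPowMul x y j := heq ▸ mem_zpowers _
  obtain ⟨t, ht⟩ := mem_zpowers_iff.mp hmem
  obtain ⟨s, rfl | rfl⟩ := Int.even_or_odd' t
  · rw [h.zpow_mul_zpow_two_mul] at ht
    exact h.zpow_ne_zpow_mul _ _ ht
  · rw [h.zpow_mul_zpow_two_mul_add_one, mul_left_inj, h.zpow_eq_zpow_iff] at ht
    have hdvd : (2 : ℤ) ^ (i + 1) ∣ 2 ^ i := by
      have hj' : (2 : ℤ) ^ (i + 1) ∣ 2 ^ j * ((2 ^ k + 2) * s + 1) :=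
        (pow_dvd_pow 2 hij).mul_right _
      simpa using dvd_add ((pow_dvd_pow 2 (by omega)).trans ht) hj'
    exact Int.not_two_pow_succ_dvd_two_pow i hdvd

theorem zpowersTwoPowMul_inj (h : IsModularPair k x y) {i j : ℕ} (hi : i ≤ k + 1)
    (hj : j ≤ k + 1) : zpowersTwoPowMul x y i = zpowersTwoPowMul x y j ↔ i = j := by
  refine ⟨fun heq => ?_, congrArg _⟩
  by_contra hne
  rcases Nat.lt_or_gt_of_ne hne with hij | hji
  · exact h.zpowersTwoPowMul_ne_of_lt hij hj heq
  · exact h.zpowersTwoPowMul_ne_of_lt hji hi heq.symm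

theorem zpowersTwoPowMul_not_le_zpowers_mul (h : IsModularPair k x y) (hk : 2 ≤ k) {i : ℕ}
    (hi : 1 ≤ i) : ¬zpowersTwoPowMul x y i ≤ zpowers (x * y) := fun hle => by
  obtain ⟨j, rfl⟩ := Nat.exists_eq_add_of_le' hi
  have hsq : x ^ (2 : ℤ) ^ (j + 1) ∈ zpowers (x * y) := by
    simpa [pow_succ, zpow_mul] using sq_mem_of_index_two (h.mul_right hk).index_zpowers (x ^ 2 ^ j)
  apply (h.mul_right hk).notMem_zpowers
  simpa using mul_mem (inv_mem hsq) (hle (mem_zpowers _))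

theorem zpow_two_mul_mem_centralizer (h : IsModularPair k x y) (c : ℤ) :
    x ^ (2 * c) ∈ centralizer {y} := by
  rw [mem_centralizer_singleton_iff, h.mul_zpow_eq_zpow_mul]
  congr 1
  exact h.zpow_eq_zpow_iff.mpr ⟨c, by ring⟩

theorem zpowersTwoPowMul_le_centralizer (h : IsModularPair k x y) {i : ℕ} (hi : 1 ≤ i) :
    zpowersTwoPowMul x y i ≤ centralizer {y} := by
  obtain ⟨j, rfl⟩ := Nat.exists_eq_add_of_le' hi
  rw [zpowersTwoPowMul, zpowers_le, pow_succ, mul_comm]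
  exact mul_mem (h.zpow_two_mul_mem_centralizer _) (mem_centralizer_singleton_iff.mpr rfl)

theorem centralizer_ne_top (h : IsModularPair k x y) : centralizer {y} ≠ ⊤ := by
  intro htop
  have hx := mem_centralizer_singleton_iff.mp (htop ▸ mem_top x)
  rw [← zpow_one x, h.mul_zpow_eq_zpow_mul, mul_left_inj, h.zpow_eq_zpow_iff] at hx
  exact Int.not_two_pow_succ_dvd_two_pow k (by simpa using hx)

theorem zpowers_cases (h : IsModularPair k x y) (hk : 2 ≤ k) (g : G) :
    zpowers g = zpowers x ∨ zpowers g = zpowersTwoPowMul x y 0 ∨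
      (∃ i < k + 1, zpowers g = zpowersTwoPowMul x y (i + 1)) ∨
      (zpowers g ≤ zpowers x ∧ zpowers g ≤ zpowersTwoPowMul x y 0 ∧
        zpowers g ≤ centralizer {y}) := by
  obtain ⟨a, rfl | rfl⟩ := h.exists_zpow_eq g
  · obtain ⟨c, rfl | rfl⟩ := Int.even_or_odd' a
    · refine .inr (.inr (.inr ⟨?_, ?_, ?_⟩)) <;> rw [zpowers_le]
      · exact zpow_mem (mem_zpowers x) _
      · rw [zpowersTwoPowMul_zero, mul_comm, zpow_mul, zpow_ofNat]
        exact sq_mem_of_index_two (h.mul_right hk).index_zpowers _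
      · exact h.zpow_two_mul_mem_centralizer c
    · exact .inl (h.zpowers_zpow (odd_two_mul_add_one c))
  · by_cases ha : (2 : ℤ) ^ (k + 1) ∣ a
    · refine .inr (.inr (.inl ⟨k, lt_add_one k, ?_⟩))
      rw [zpowersTwoPowMul, h.zpow_eq_zpow_iff.mpr (dvd_sub dvd_rfl ha)]
    · have ha0 : a ≠ 0 := by rintro rfl; exact ha (dvd_zero _)
      obtain ⟨v, c, hc, rfl⟩ := Int.exists_eq_two_pow_mul_odd ha0
      have hv : v ≤ k := by
        by_contra
        exact ha ((pow_dvd_pow 2 (by omega)).mul_right c)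
      rw [h.zpowers_zpow_mul_mul hk _ hc]
      rcases v with _ | j
      · exact .inr (.inl rfl)
      · exact .inr (.inr (.inl ⟨j, by omega, rfl⟩))

theorem factorPair_injective (h : IsModularPair k x y) : Function.Injective (factorPair x y k) := by
  rintro (i | i) (j | j) hij <;> simp only [factorPair, Prod.mk.injEq] at hij
  · exact congrArg _ (Fin.ext ((h.zpowersTwoPowMul_inj i.is_le j.is_le).mp hij.2))
  · exact absurd hij.1.symm (h.zpowersTwoPowMul_ne 0)
  · exact absurd hij.1 (h.zpowersTwoPowMul_ne 0)
  · have := (h.zpowersTwoPowMul_inj (by omega) (by omega)).mp hij.2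
    exact congrArg _ (Fin.ext (by omega))

theorem factorPair_ne_swap (h : IsModularPair k x y) (s t : Fin (k + 2) ⊕ Fin (k + 1)) :
    factorPair x y k s ≠ (factorPair x y k t).swap := by
  rcases s with i | i <;> rcases t with j | j <;> simp only [factorPair, Prod.swap_prod_mk, ne_eq,
    Prod.mk.injEq, not_and]
  · exact fun hA => absurd hA.symm (h.zpowersTwoPowMul_ne _)
  · exact fun hA => absurd hA.symm (h.zpowersTwoPowMul_ne _)
  · exact fun _ hA => absurd hA (h.zpowersTwoPowMul_ne _)
  · exact fun h0 => absurd ((h.zpowersTwoPowMul_inj (by omega) (by omega)).mp h0) (by omega)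

theorem isCyclicFactorization_factorPair (h : IsModularPair k x y) (hk : 2 ≤ k)
    (s : Fin (k + 2) ⊕ Fin (k + 1)) : IsCyclicFactorization (factorPair x y k s) := by
  rcases s with i | i
  · exact ⟨isCyclic_zpowers _, isCyclic_zpowers _,
      coe_mul_coe_eq_univ_of_index_eq_two h.index_zpowers (h.zpowersTwoPowMul_not_le i)⟩
  · refine ⟨isCyclic_zpowers _, isCyclic_zpowers _, ?_⟩
    simp only [factorPair, zpowersTwoPowMul_zero]
    exact coe_mul_coe_eq_univ_of_index_eq_two (h.mul_right hk).index_zpowers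
      (h.zpowersTwoPowMul_not_le_zpowers_mul hk (by omega))

theorem mem_range_factorPair (h : IsModularPair k x y) (hk : 2 ≤ k) {g g' : G}
    (hgg : (zpowers g : Set G) * (zpowers g' : Set G) = Set.univ) :
    (zpowers g, zpowers g') ∈
      Set.range (Sum.elim (factorPair x y k) (Prod.swap ∘ factorPair x y k)) := by
  have hK0 : zpowersTwoPowMul x y 0 ≠ ⊤ := by simpa using (h.mul_right hk).zpowers_ne_top
  have hbad {M : Subgroup G} (hM : M ≠ ⊤) (hg : zpowers g ≤ M) (hg' : zpowers g' ≤ M) : False :=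
    coe_mul_coe_ne_univ_of_le hg hg' hM hgg
  have hC {i : ℕ} : zpowersTwoPowMul x y (i + 1) ≤ centralizer {y} :=
    h.zpowersTwoPowMul_le_centralizer (by omega)
  rcases h.zpowers_cases hk g with hg | hg | ⟨i, hi, hg⟩ | ⟨hgA, hg0, hgC⟩ <;>
    rcases h.zpowers_cases hk g' with hg' | hg' | ⟨j, hj, hg'⟩ | ⟨hgA', hg0', hgC'⟩
  · exact (hbad h.zpowers_ne_top hg.le hg'.le).elim
  · exact ⟨.inl (.inl 0), by simp [factorPair, hg, hg']⟩
  · exact ⟨.inl (.inl ⟨j + 1, by omega⟩), by simp [factorPair, hg, hg']⟩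
  · exact (hbad h.zpowers_ne_top hg.le hgA').elim
  · exact ⟨.inr (.inl 0), by simp [factorPair, hg, hg']⟩
  · exact (hbad hK0 hg.le hg'.le).elim
  · exact ⟨.inl (.inr ⟨j, hj⟩), by simp [factorPair, hg, hg']⟩
  · exact (hbad hK0 hg.le hg0').elim
  · exact ⟨.inr (.inl ⟨i + 1, by omega⟩), by simp [factorPair, hg, hg']⟩
  · exact ⟨.inr (.inr ⟨i, hi⟩), by simp [factorPair, hg, hg']⟩
  · exact (hbad h.centralizer_ne_top (hg ▸ hC) (hg' ▸ hC)).elim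
  · exact (hbad h.centralizer_ne_top (hg ▸ hC) hgC').elim
  · exact (hbad h.zpowers_ne_top hgA hg'.le).elim
  · exact (hbad hK0 hg0 hg'.le).elim
  · exact (hbad h.centralizer_ne_top hgC (hg' ▸ hC)).elim
  · exact (hbad h.zpowers_ne_top hgA hgA').elim

theorem cf2_eq (h : IsModularPair k x y) (hk : 2 ≤ k) : CF2 G = 4 * k + 6 := by
  have hinj : Function.Injective (Sum.elim (factorPair x y k) (Prod.swap ∘ factorPair x y k)) :=
    h.factorPair_injective.sumElim (Prod.swap_injective.comp h.factorPair_injective)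
      h.factorPair_ne_swap
  have hrange : Set.range (Sum.elim (factorPair x y k) (Prod.swap ∘ factorPair x y k)) =
      {p | IsCyclicFactorization p} := by
    ext p
    constructor
    · rintro ⟨s | s, rfl⟩
      · exact h.isCyclicFactorization_factorPair hk s
      · exact (h.isCyclicFactorization_factorPair hk s).swap
    · obtain ⟨H, L⟩ := p
      rintro ⟨hH, hL, hHL⟩
      obtain ⟨g, rfl⟩ := H.isCyclic_iff_exists_zpowers_eq_top.mp hH
      obtain ⟨g', rfl⟩ := L.isCyclic_iff_exists_zpowers_eq_top.mp hL
      exact h.mem_range_factorPair hk hHL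
  rw [show CF2 G = Nat.card {p // IsCyclicFactorization p} from rfl, ← Set.coe_ofPred, ← hrange,
    Nat.card_range_of_injective hinj]
  simp only [Nat.card_eq_fintype_card, Fintype.card_sum, Fintype.card_fin]
  ring

end IsModularPair

theorem cf2_modular_2_group_general (n : ℕ) (hn : 4 ≤ n)
    (G : Type*) [Group G] (x y : G)
    (hx : x ^ (2 ^ (n - 1)) = 1) (hy : y ^ 2 = 1)
    (hrel : y⁻¹ * x * y = x ^ (2 ^ (n - 2) + 1))
    (hgen : Subgroup.closure {x, y} = ⊤) (hcard : Nat.card G = 2 ^ n) :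
    CF2 G = 4 * n - 2 := by
  obtain ⟨k, rfl⟩ : ∃ k, n = k + 2 := ⟨n - 2, by omega⟩
  have h : IsModularPair k x y := ⟨by simpa using hx, hy, by simpa using hrel, hgen, hcard⟩
  rw [h.cf2_eq (by omega)]
  omega

theorem cf2_modular_2_group (n : ℕ) (hn : 4 ≤ n)
    (G : Type*) [Group G] [Fintype G] (x y : G)
    (hx : x ^ (2 ^ (n - 1)) = 1) (hy : y ^ 2 = 1)
    (hrel : y⁻¹ * x * y = x ^ (2 ^ (n - 2) + 1))
    (hgen : Subgroup.closure {x, y} = ⊤) (hcard : Nat.card G = 2 ^ n) :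
    CF2 G = 4 * n - 2 :=
  cf2_modular_2_group_general n hn G x y hx hy hrel hgen hcard
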